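/- Let S be a pomonoid, s, t ∈ S, and suppose there exists u ∈ S with us ≤ ut such that u is related to 1 by chains: u = 1, or there exist s₁,…,sₙ, t₁,…,tₘ ∈ S with u ≤ c₁s₁, d₁s₁ ≤ c₂s₂, …, dₙsₙ ≤ 1 and 1 ≤ p₁t₁, q₁t₁ ≤ p₂t₂, …, qₘtₘ ≤ u, where each (cᵢ,dᵢ) and each (pⱼ,qⱼ) equals (s,t). Then u² = u, i.e., u is an idempotent. -/
import Mathlib


/-- A chain `a ≤ s·w₁, t·w₁ ≤ s·w₂, …, t·wₙ ≤ b` in a pomonoid, all pairs equal `(s, t)`. -/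
def ChainST {S : Type} [Monoid S] [PartialOrder S] (s t a b : S) : Prop :=
  ∃ n : ℕ, ∃ w : Fin (n + 1) → S,
    a ≤ s * w 0 ∧
    (∀ i : Fin n, t * w i.castSucc ≤ s * w i.succ) ∧
    t * w (Fin.last n) ≤ b

lemma chainST_mul_le {S : Type} [Monoid S] [PartialOrder S]
    [CovariantClass S S (· * ·) (· ≤ ·)]
    [CovariantClass S S (Function.swap (· * ·)) (· ≤ ·)]
    {s t u a b : S} (hu : u * s ≤ u * t) (h : ChainST s t a b) :
    u * a ≤ u * b := by
  obtain ⟨n, w, h1, h2, h3⟩ := h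
  have key : ∀ i : ℕ, ∀ hi : i < n + 1, u * a ≤ u * (s * w ⟨i, hi⟩) := by
    intro i
    induction i with
    | zero => intro hi; exact mul_le_mul_right h1 u
    | succ k ih =>
      intro hi
      have hk : k < n + 1 := Nat.lt_of_succ_lt hi
      have step1 : u * (s * w ⟨k, hk⟩) ≤ u * (t * w ⟨k, hk⟩) := by
        rw [← mul_assoc, ← mul_assoc]
        exact mul_le_mul_left hu _
      have hk' : k < n := Nat.lt_of_succ_lt_succ hi
      have step2 := h2 ⟨k, hk'⟩
      have : (⟨k, hk⟩ : Fin (n+1)) = (Fin.castSucc ⟨k, hk'⟩) := rfl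
      have step3 : u * (t * w ⟨k, hk⟩) ≤ u * (s * w ⟨k + 1, hi⟩) := by
        rw [this]
        exact mul_le_mul_right step2 u
      exact le_trans (ih hk) (le_trans step1 step3)
  have hlast := key n (Nat.lt_succ_self n)
  have step1 : u * (s * w (Fin.last n)) ≤ u * (t * w (Fin.last n)) := by
    rw [← mul_assoc, ← mul_assoc]
    exact mul_le_mul_left hu _
  have step2 : u * (t * w (Fin.last n)) ≤ u * b := mul_le_mul_right h3 u
  exact le_trans hlast (le_trans step1 step2)

/-- if `us ≤ ut` and `u` is connected to `1` by `(s,t)`-chains in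
both directions (or `u = 1`), then `u` is idempotent. -/
theorem idempotent_of_chains_to_one
    {S : Type} [Monoid S] [PartialOrder S]
    [CovariantClass S S (· * ·) (· ≤ ·)]
    [CovariantClass S S (Function.swap (· * ·)) (· ≤ ·)]
    (s t u : S) (hu : u * s ≤ u * t)
    (hchain : u = 1 ∨ (ChainST s t u 1 ∧ ChainST s t 1 u)) :
    u * u = u := by
  rcases hchain with h1 | ⟨hc1, hc2⟩
  · simp [h1]
  · have le1 : u * u ≤ u := by
      have := chainST_mul_le hu hc1
      simpa using this
    have le2 : u ≤ u * u := by
      have := chainST_mul_le hu hc2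
      simpa using this
    exact le_antisymm le1 le2
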